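/- arXiv:2508.02014 — 3 statements merged into one kernel-verified Lean document; each statement's English description precedes it below -/
import Mathlib

section
/- For any x, h in a real inner product space and any real p ≥ 2, one has |‖x+h‖^p − ‖x‖^p − p‖x‖^{p−2}⟨x,h⟩| ≤ c_p(‖x‖^{p−2}‖h‖² + ‖h‖^p) for some constant c_p depending only on p. -/
/-!
Put `a = ‖x‖²`, `s = ‖x + h‖²` and `q = p / 2`, so that `s - a = 2⟪x, h⟫ + ‖h‖²` and the quantity
to bound is `(s^q - a^q - q a^(q-1) (s - a)) + q a^(q-1) ‖h‖²`. If `‖h‖ < ‖x‖`, then `s ≤ 4a` and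
`|s - a| ≤ 3‖x‖‖h‖`, and the second-order bound `|s^q - a^q - q a^(q-1) (s - a)| ≤ C a^(q-2) (s - a)²`
yields a multiple of `‖x‖^(p-2) ‖h‖²`. That bound reduces by homogeneity to `a = 1`, where it follows
from the mean value theorem, because `t ↦ t^(q-1)` is Lipschitz at `1` on `[0, 4]` even for `q < 2`.
If `‖x‖ ≤ ‖h‖`, each of the three terms is at most a multiple of `‖h‖^p`.
-/

open Set
open scoped RealInnerProductSpace

namespace Real

lemma abs_rpow_sub_one_le_abs_sub_one {b t : ℝ} (hb₀ : 0 ≤ b) (hb₁ : b ≤ 1) (ht : 0 ≤ t) :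
    |t ^ b - 1| ≤ |t - 1| := by
  rcases le_total t 1 with ht1 | ht1
  · have : t ≤ t ^ b := self_le_rpow_of_le_one ht ht1 hb₁
    have : t ^ b ≤ 1 := rpow_le_one ht ht1 hb₀
    rw [abs_of_nonpos (by linarith), abs_of_nonpos (by linarith)]
    linarith
  · have : 1 ≤ t ^ b := one_le_rpow ht1 hb₀
    have : t ^ b ≤ t := rpow_le_self_of_one_le ht1 hb₁
    rw [abs_of_nonneg (by linarith), abs_of_nonneg (by linarith)]
    linarith

lemma abs_rpow_sub_rpow_le_of_one_le {b M t u : ℝ} (hb : 1 ≤ b) (ht : t ∈ Icc 0 M)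
    (hu : u ∈ Icc 0 M) : |t ^ b - u ^ b| ≤ b * M ^ (b - 1) * |t - u| := by
  refine (convex_Icc 0 M).norm_image_sub_le_of_norm_hasDerivWithin_le
    (fun x _ ↦ (hasDerivAt_rpow_const (Or.inr hb)).hasDerivWithinAt) (fun x hx ↦ ?_) hu ht
  rw [norm_mul, norm_of_nonneg (by linarith), norm_of_nonneg (rpow_nonneg hx.1 _)]
  gcongr
  exacts [hx.1, hx.2]

lemma exists_abs_rpow_sub_one_le {b : ℝ} (hb : 0 ≤ b) (M : ℝ) :
    ∃ L, 0 ≤ L ∧ ∀ t ∈ Icc 0 M, |t ^ b - 1| ≤ L * |t - 1| := by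
  rcases le_total b 1 with hb1 | hb1
  · exact ⟨1, zero_le_one, fun t ht ↦ by simpa using abs_rpow_sub_one_le_abs_sub_one hb hb1 ht.1⟩
  · refine ⟨b * max M 1 ^ (b - 1), by positivity, fun t ht ↦ ?_⟩
    simpa using abs_rpow_sub_rpow_le_of_one_le hb1 ⟨ht.1, ht.2.trans (le_max_left M 1)⟩
      ⟨zero_le_one, le_max_right M 1⟩

lemma exists_abs_rpow_sub_one_sub_mul_le {q : ℝ} (hq : 1 ≤ q) (M : ℝ) :
    ∃ C, 0 ≤ C ∧ ∀ r ∈ Icc 0 M, |r ^ q - 1 - q * (r - 1)| ≤ C * (r - 1) ^ 2 := by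
  obtain ⟨L, hL, hLip⟩ := exists_abs_rpow_sub_one_le (b := q - 1) (by linarith) (max M 1)
  refine ⟨q * L, by positivity, fun r hr ↦ ?_⟩
  have hseg : uIcc 1 r ⊆ Icc 0 (max M 1) :=
    uIcc_subset_Icc ⟨zero_le_one, le_max_right M 1⟩ ⟨hr.1, hr.2.trans (le_max_left M 1)⟩
  have hderiv (c : ℝ) : HasDerivAt (fun s ↦ s ^ q - q * s) (q * c ^ (q - 1) - q) c := by
    simpa using (hasDerivAt_rpow_const (x := c) (Or.inr hq)).fun_sub
      ((hasDerivAt_id' c).const_mul q)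
  have hbound : ∀ c ∈ uIcc 1 r, ‖q * c ^ (q - 1) - q‖ ≤ q * L * |r - 1| := fun c hc ↦
    calc ‖q * c ^ (q - 1) - q‖ = q * |c ^ (q - 1) - 1| := by
          rw [← mul_sub_one, norm_mul, norm_of_nonneg (by linarith), norm_eq_abs]
      _ ≤ q * (L * |c - 1|) := by gcongr; exact hLip c (hseg hc)
      _ ≤ q * L * |r - 1| := by
          rw [← mul_assoc]
          exact mul_le_mul_of_nonneg_left (abs_sub_left_of_mem_uIcc hc) (by positivity)
  have := convex_uIcc 1 r |>.norm_image_sub_le_of_norm_hasDerivWithin_le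
    (fun c _ ↦ (hderiv c).hasDerivWithinAt) hbound left_mem_uIcc right_mem_uIcc
  simp only [one_rpow, mul_one, norm_eq_abs] at this
  calc |r ^ q - 1 - q * (r - 1)| = |r ^ q - q * r - (1 - q)| := by ring_nf
    _ ≤ q * L * |r - 1| * |r - 1| := this
    _ = q * L * (r - 1) ^ 2 := by rw [mul_assoc, ← sq, sq_abs]

lemma exists_abs_rpow_sub_rpow_sub_mul_le {q : ℝ} (hq : 1 ≤ q) (M : ℝ) :
    ∃ C, 0 ≤ C ∧ ∀ a s : ℝ, 0 < a → 0 ≤ s → s ≤ M * a →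
      |s ^ q - a ^ q - q * a ^ (q - 1) * (s - a)| ≤ C * (a ^ (q - 2) * (s - a) ^ 2) := by
  obtain ⟨C, hC₀, hC⟩ := exists_abs_rpow_sub_one_sub_mul_le hq M
  refine ⟨C, hC₀, fun a s ha hs hsM ↦ ?_⟩
  have hscaled := hC (s / a) ⟨div_nonneg hs ha.le, (div_le_iff₀ ha).2 hsM⟩
  have haq : 0 < a ^ q := rpow_pos_of_pos ha q
  have hlhs : s ^ q - a ^ q - q * a ^ (q - 1) * (s - a) =
      a ^ q * ((s / a) ^ q - 1 - q * (s / a - 1)) := by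
    rw [div_rpow hs ha.le, rpow_sub_one ha.ne']
    field_simp
  have hrhs : a ^ (q - 2) * (s - a) ^ 2 = a ^ q * (s / a - 1) ^ 2 := by
    rw [rpow_sub ha, rpow_two]
    field_simp
  rw [hlhs, hrhs, abs_mul, abs_of_pos haq, mul_left_comm]
  exact mul_le_mul_of_nonneg_left hscaled haq.le

lemma rpow_eq_sq_rpow_half {u : ℝ} (hu : 0 ≤ u) (p : ℝ) : u ^ p = (u ^ 2) ^ (p / 2) := by
  rw [← rpow_natCast_mul hu]
  congr 1
  push_cast
  ring

end Real

open Real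

section InnerProductSpace

variable {H : Type*} [NormedAddCommGroup H] [InnerProductSpace ℝ H]

lemma abs_norm_add_rpow_sub_le_of_norm_le {p : ℝ} (hp : 2 ≤ p) {x h : H} (hxh : ‖x‖ ≤ ‖h‖) :
    |‖x + h‖ ^ p - ‖x‖ ^ p - p * ‖x‖ ^ (p - 2) * ⟪x, h⟫| ≤ (p + 2) * 2 ^ p * ‖h‖ ^ p := by
  set m := 2 * ‖h‖
  have hx : ‖x‖ ≤ m := by linarith [norm_nonneg h]
  have hh : ‖h‖ ≤ m := by linarith [norm_nonneg h]
  have hxh' : ‖x + h‖ ≤ m := (norm_add_le x h).trans (by linarith)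
  have hinner : |p * ‖x‖ ^ (p - 2) * ⟪x, h⟫| ≤ p * m ^ p :=
    calc |p * ‖x‖ ^ (p - 2) * ⟪x, h⟫| = p * ‖x‖ ^ (p - 2) * |⟪x, h⟫| := by
          rw [abs_mul, abs_mul, abs_of_nonneg (by linarith), abs_of_nonneg (by positivity)]
      _ ≤ p * m ^ (p - 2) * (m * m) := by
          have : |⟪x, h⟫| ≤ m * m := (abs_real_inner_le_norm x h).trans (by gcongr)
          have : ‖x‖ ^ (p - 2) ≤ m ^ (p - 2) := by gcongr
          gcongr
      _ = p * m ^ p := by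
          rw [mul_assoc, ← sq, ← rpow_two, ← rpow_add' (by positivity) (by linarith)]
          ring_nf
  calc |‖x + h‖ ^ p - ‖x‖ ^ p - p * ‖x‖ ^ (p - 2) * ⟪x, h⟫|
      ≤ |‖x + h‖ ^ p| + |‖x‖ ^ p| + |p * ‖x‖ ^ (p - 2) * ⟪x, h⟫| :=
        (abs_sub _ _).trans (by gcongr; exact abs_sub _ _)
    _ ≤ m ^ p + m ^ p + p * m ^ p := by
        rw [abs_of_nonneg (by positivity), abs_of_nonneg (by positivity)]
        gcongr
    _ = (p + 2) * 2 ^ p * ‖h‖ ^ p := by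
        rw [mul_rpow zero_le_two (norm_nonneg h)]
        ring

lemma exists_abs_norm_add_rpow_sub_le_of_norm_lt {p : ℝ} (hp : 2 ≤ p) :
    ∃ C, ∀ x h : H, ‖h‖ < ‖x‖ →
      |‖x + h‖ ^ p - ‖x‖ ^ p - p * ‖x‖ ^ (p - 2) * ⟪x, h⟫| ≤ C * (‖x‖ ^ (p - 2) * ‖h‖ ^ 2) := by
  obtain ⟨C, hC₀, hC⟩ := exists_abs_rpow_sub_rpow_sub_mul_le (q := p / 2) (by linarith) 4
  refine ⟨9 * C + p / 2, fun x h hhx ↦ ?_⟩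
  have hsa : ‖x + h‖ ^ 2 - ‖x‖ ^ 2 = 2 * ⟪x, h⟫ + ‖h‖ ^ 2 := by rw [norm_add_sq_real]; ring
  have hs4 : ‖x + h‖ ^ 2 ≤ 4 * ‖x‖ ^ 2 := by nlinarith [norm_add_le x h, norm_nonneg (x + h)]
  have hxp : ‖x‖ ^ p = (‖x‖ ^ 2) ^ (p / 2) := rpow_eq_sq_rpow_half (norm_nonneg x) p
  have hxp2 : ‖x‖ ^ (p - 2) = (‖x‖ ^ 2) ^ (p / 2 - 1) := by
    rw [rpow_eq_sq_rpow_half (norm_nonneg x)]; ring_nf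
  have hxhp : ‖x + h‖ ^ p = (‖x + h‖ ^ 2) ^ (p / 2) := rpow_eq_sq_rpow_half (norm_nonneg _) p
  have hsa_abs : |‖x + h‖ ^ 2 - ‖x‖ ^ 2| ≤ 3 * ‖x‖ * ‖h‖ := by
    obtain ⟨hlo, hhi⟩ := abs_le.1 (abs_real_inner_le_norm x h)
    rw [hsa, abs_le]
    constructor <;> nlinarith [norm_nonneg h]
  have hsq : (‖x + h‖ ^ 2 - ‖x‖ ^ 2) ^ 2 ≤ 9 * ‖x‖ ^ 2 * ‖h‖ ^ 2 :=
    calc (‖x + h‖ ^ 2 - ‖x‖ ^ 2) ^ 2 = |‖x + h‖ ^ 2 - ‖x‖ ^ 2| ^ 2 := (sq_abs _).symm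
      _ ≤ (3 * ‖x‖ * ‖h‖) ^ 2 := by gcongr
      _ = 9 * ‖x‖ ^ 2 * ‖h‖ ^ 2 := by ring
  set a := ‖x‖ ^ 2
  set s := ‖x + h‖ ^ 2
  have ha : 0 < a := by have := (norm_nonneg h).trans_lt hhx; positivity
  have hpow : a ^ (p / 2 - 2) * a = a ^ (p / 2 - 1) := by rw [← rpow_add_one ha.ne']; ring_nf
  calc |‖x + h‖ ^ p - ‖x‖ ^ p - p * ‖x‖ ^ (p - 2) * ⟪x, h⟫|
      = |(s ^ (p / 2) - a ^ (p / 2) - p / 2 * a ^ (p / 2 - 1) * (s - a))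
          + p / 2 * (a ^ (p / 2 - 1) * ‖h‖ ^ 2)| := by
        rw [hxp, hxp2, hxhp, hsa]; ring_nf
    _ ≤ C * (a ^ (p / 2 - 2) * (s - a) ^ 2) + p / 2 * (a ^ (p / 2 - 1) * ‖h‖ ^ 2) := by
        refine (abs_add_le _ _).trans (add_le_add (hC a s ha (by positivity) hs4) ?_)
        rw [abs_of_nonneg (by positivity)]
    _ ≤ C * (a ^ (p / 2 - 2) * (9 * a * ‖h‖ ^ 2)) + p / 2 * (a ^ (p / 2 - 1) * ‖h‖ ^ 2) := by
        gcongr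
    _ = (9 * C + p / 2) * (‖x‖ ^ (p - 2) * ‖h‖ ^ 2) := by
        rw [hxp2, ← hpow]
        ring

end InnerProductSpace

theorem stmt4 {H : Type*} [NormedAddCommGroup H] [InnerProductSpace ℝ H] (p : ℝ) (hp : 2 ≤ p) :
    ∃ c : ℝ, 0 < c ∧ ∀ x h : H,
      |‖x + h‖ ^ p - ‖x‖ ^ p - p * ‖x‖ ^ (p - 2) * ⟪x, h⟫| ≤
        c * (‖x‖ ^ (p - 2) * ‖h‖ ^ 2 + ‖h‖ ^ p) := by
  obtain ⟨C, hC⟩ := exists_abs_norm_add_rpow_sub_le_of_norm_lt (H := H) hp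
  set c := max C ((p + 2) * 2 ^ p)
  have hc : 0 < c := lt_max_of_lt_right (mul_pos (by linarith) (by positivity))
  refine ⟨c, hc, fun x h ↦ ?_⟩
  have hT₁ : 0 ≤ ‖x‖ ^ (p - 2) * ‖h‖ ^ 2 := by positivity
  have hT₂ : 0 ≤ ‖h‖ ^ p := by positivity
  rcases le_or_gt ‖x‖ ‖h‖ with hxh | hhx
  · calc _ ≤ (p + 2) * 2 ^ p * ‖h‖ ^ p := abs_norm_add_rpow_sub_le_of_norm_le hp hxh
      _ ≤ c * ‖h‖ ^ p := by gcongr; exact le_max_right _ _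
      _ ≤ c * (‖x‖ ^ (p - 2) * ‖h‖ ^ 2 + ‖h‖ ^ p) := by gcongr; exact le_add_of_nonneg_left hT₁
  · calc _ ≤ C * (‖x‖ ^ (p - 2) * ‖h‖ ^ 2) := hC x h hhx
      _ ≤ c * (‖x‖ ^ (p - 2) * ‖h‖ ^ 2) := by gcongr; exact le_max_left _ _
      _ ≤ c * (‖x‖ ^ (p - 2) * ‖h‖ ^ 2 + ‖h‖ ^ p) := by gcongr; exact le_add_of_nonneg_right hT₂
end

section
/- Let μ be a probability measure on a measurable space and ν another probability measure with density ρ = dμ/dν. If R(μ‖ν) = ∫ log(ρ) dμ denotes the relative entropy, then for the measures constructed from a control g with ∫ l(g) dθ_T ≤ N over a set Γ with θ_T(Γ) ∈ (0,∞) and m := ∫_Γ g dθ_T > 0 — namely μ(A) = (1/m)∫_A g dθ_T and ν(A) = θ_T(A∩Γ)/θ_T(Γ) — one has R(μ‖ν) = (1/m)∫_Γ (l(g) + g − 1) dθ_T + log(θ_T(Γ)/m). -/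
open MeasureTheory
open scoped ENNReal

theorem stmt12 {Z : Type*} [MeasurableSpace Z] (θT : Measure Z)
    (Γ : Set Z) (hΓm : MeasurableSet Γ) (hΓ0 : θT Γ ≠ 0) (hΓtop : θT Γ ≠ ⊤)
    (g : Z → ℝ) (hg : Measurable g) (hgnn : ∀ x, 0 ≤ g x)
    (N m : ℝ) (hm : 0 < m)
    (hmval : ∫ x in Γ, g x ∂θT = m)
    (hN : ∫ x in Γ, (g x * Real.log (g x) - g x + 1) ∂θT ≤ N)
    (hint1 : Integrable g (θT.restrict Γ))
    (hint2 : Integrable (fun x => g x * Real.log (g x)) (θT.restrict Γ)) :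
    ∫ x, Real.log ((θT Γ).toReal / m * g x)
        ∂((θT.restrict Γ).withDensity fun x => ENNReal.ofReal (g x / m)) =
      (1 / m) * ∫ x in Γ, ((g x * Real.log (g x) - g x + 1) + g x - 1) ∂θT +
        Real.log ((θT Γ).toReal / m) := by
  set c : ℝ := (θT Γ).toReal / m with hc
  have hc0 : 0 < c := div_pos (ENNReal.toReal_pos hΓ0 hΓtop) hm
  have hdens : (fun x => ENNReal.ofReal (g x / m)) =
      fun x => ((g x / m).toNNReal : ℝ≥0∞) := rfl
  rw [hdens, integral_withDensity_eq_integral_smul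
      (by measurability : Measurable fun x => (g x / m).toNNReal)]
  have heq : ∀ x, (g x / m).toNNReal • Real.log (c * g x)
      = (1/m) * (g x * Real.log c + g x * Real.log (g x)) := by
    intro x
    have h1 : ((g x / m).toNNReal : ℝ) = g x / m :=
      Real.coe_toNNReal _ (div_nonneg (hgnn x) hm.le)
    rw [NNReal.smul_def, smul_eq_mul, h1]
    rcases eq_or_lt_of_le (hgnn x) with h | h
    · simp [← h]
    · rw [Real.log_mul hc0.ne' h.ne']
      field_simp
  simp only [heq]
  rw [integral_const_mul, integral_add (hint1.mul_const (Real.log c)) hint2,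
    integral_mul_const, hmval]
  have h2 : ∀ x, (g x * Real.log (g x) - g x + 1) + g x - 1 = g x * Real.log (g x) := by
    intro x; ring
  simp only [h2]
  field_simp
  ring
end

section
/- With the notation of the previous entropy identity, if additionally ∫_Γ l(g) dθ_T ≤ N then R(μ‖ν) ≤ N/m + 1 − θ_T(Γ)/m + log(θ_T(Γ)/m). -/
open MeasureTheory
open scoped ENNReal

/-!
Since `dμ/dν = (θ_T(Γ)/m) g`, the relative entropy is `log (θ_T(Γ)/m) + (1/m) ∫_Γ g log g`, and
`∫_Γ g log g = ∫_Γ l(g) + m - θ_T(Γ) ≤ N + m - θ_T(Γ)`.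
-/

namespace MeasureTheory

variable {Z : Type*} [MeasurableSpace Z] {μ : Measure Z} {g : Z → ℝ}

theorem integral_withDensity_ofReal_div (hg : Measurable g) (hgnn : ∀ x, 0 ≤ g x) {m : ℝ}
    (hm : 0 ≤ m) (f : Z → ℝ) :
    ∫ x, f x ∂μ.withDensity (fun x => ENNReal.ofReal (g x / m)) = (∫ x, g x * f x ∂μ) / m := by
  rw [← integral_div]
  refine (integral_withDensity_eq_integral_smul (hg.div_const m).real_toNNReal f).trans ?_
  congr 1 with x
  rw [NNReal.smul_def, Real.coe_toNNReal _ (div_nonneg (hgnn x) hm), smul_eq_mul]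
  ring

theorem integral_mul_log_eq_integral_entropy_add [IsFiniteMeasure μ] (hg : Integrable g μ)
    (hgl : Integrable (fun x => g x * Real.log (g x)) μ) :
    ∫ x, g x * Real.log (g x) ∂μ =
      ∫ x, (g x * Real.log (g x) - g x + 1) ∂μ + ∫ x, g x ∂μ - μ.real Set.univ := by
  rw [integral_add (f := fun x => g x * Real.log (g x) - g x) (hgl.sub hg) (integrable_const 1),
    integral_sub hgl hg, integral_const, smul_eq_mul, mul_one]
  ring

end MeasureTheory

theorem Real.mul_log_mul_eq {a : ℝ} (ha : a ≠ 0) (t : ℝ) :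
    t * Real.log (a * t) = Real.log a * t + t * Real.log t := by
  rcases eq_or_ne t 0 with rfl | ht
  · simp
  · rw [Real.log_mul ha ht]
    ring

open MeasureTheory

theorem stmt13_general {Z : Type*} [MeasurableSpace Z] (θT : Measure Z)
    (Γ : Set Z) (hΓ0 : θT Γ ≠ 0) (hΓtop : θT Γ ≠ ⊤)
    (g : Z → ℝ) (hg : Measurable g) (hgnn : ∀ x, 0 ≤ g x)
    (N m : ℝ) (hm : 0 < m)
    (hmval : ∫ x in Γ, g x ∂θT = m)
    (hN : ∫ x in Γ, (g x * Real.log (g x) - g x + 1) ∂θT ≤ N)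
    (hint1 : Integrable g (θT.restrict Γ))
    (hint2 : Integrable (fun x => g x * Real.log (g x)) (θT.restrict Γ)) :
    ∫ x, Real.log ((θT Γ).toReal / m * g x)
        ∂((θT.restrict Γ).withDensity fun x => ENNReal.ofReal (g x / m)) ≤
      N / m + 1 - (θT Γ).toReal / m + Real.log ((θT Γ).toReal / m) := by
  set c := (θT Γ).toReal
  have hc : c / m ≠ 0 := (div_pos (ENNReal.toReal_pos hΓ0 hΓtop) hm).ne'
  have : IsFiniteMeasure (θT.restrict Γ) := isFiniteMeasure_restrict.2 hΓtop
  have hentropy : ∫ x in Γ, g x * Real.log (g x) ∂θT ≤ N + m - c := by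
    rw [integral_mul_log_eq_integral_entropy_add hint1 hint2, hmval,
      measureReal_restrict_apply_univ, measureReal_def]
    linarith
  calc _ = (∫ x in Γ, g x * Real.log (c / m * g x) ∂θT) / m :=
        integral_withDensity_ofReal_div hg hgnn hm.le _
    _ = (Real.log (c / m) * m + ∫ x in Γ, g x * Real.log (g x) ∂θT) / m := by
        simp only [Real.mul_log_mul_eq hc]
        rw [integral_add (hint1.const_mul _) hint2, integral_const_mul, hmval]
    _ ≤ (Real.log (c / m) * m + (N + m - c)) / m := by gcongr
    _ = _ := by
        field_simp
        ring

theorem stmt13 {Z : Type*} [MeasurableSpace Z] (θT : Measure Z)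
    (Γ : Set Z) (hΓm : MeasurableSet Γ) (hΓ0 : θT Γ ≠ 0) (hΓtop : θT Γ ≠ ⊤)
    (g : Z → ℝ) (hg : Measurable g) (hgnn : ∀ x, 0 ≤ g x)
    (N m : ℝ) (hm : 0 < m)
    (hmval : ∫ x in Γ, g x ∂θT = m)
    (hN : ∫ x in Γ, (g x * Real.log (g x) - g x + 1) ∂θT ≤ N)
    (hint1 : Integrable g (θT.restrict Γ))
    (hint2 : Integrable (fun x => g x * Real.log (g x)) (θT.restrict Γ)) :
    ∫ x, Real.log ((θT Γ).toReal / m * g x)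
        ∂((θT.restrict Γ).withDensity fun x => ENNReal.ofReal (g x / m)) ≤
      N / m + 1 - (θT Γ).toReal / m + Real.log ((θT Γ).toReal / m) :=
  stmt13_general θT Γ hΓ0 hΓtop g hg hgnn N m hm hmval hN hint1 hint2
end
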